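/- arXiv:2405.17614 — 13 statements merged into one kernel-verified Lean document; each statement's English description precedes it below -/
import Mathlib

section
/- Let H be a real or complex Hilbert space, X ⊆ H a bounded set, and ξ ∈ H. If ξ lies in the norm closure of the convex hull of X, then for every η ∈ H there exists ζ ∈ X such that ‖ξ - ζ‖ ≤ ‖η - ζ‖. -/
/-! If every point of `X` were strictly closer to `η` than to `ξ`, then `X` would lie in the
closed half-space `{z | ‖η - z‖ ≤ ‖ξ - z‖}`, hence so would the closed convex hull of `X` and in
particular `ξ`. This forces `η = ξ`, which is absurd as soon as `X` has a point. -/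

section HalfSpace

variable {H : Type*} [NormedAddCommGroup H] [InnerProductSpace ℝ H]

theorem norm_sub_le_norm_sub_iff_inner_le (x y z : H) :
    ‖x - z‖ ≤ ‖y - z‖ ↔ 2 * inner ℝ (y - x) z ≤ ‖y‖ ^ 2 - ‖x‖ ^ 2 := by
  rw [← sq_le_sq₀ (norm_nonneg _) (norm_nonneg _), norm_sub_sq_real, norm_sub_sq_real,
    inner_sub_left]
  constructor <;> intro h <;> linarith

theorem convex_setOf_norm_sub_le_norm_sub (x y : H) :
    Convex ℝ {z : H | ‖x - z‖ ≤ ‖y - z‖} := by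
  simp_rw [norm_sub_le_norm_sub_iff_inner_le]
  exact convex_halfSpace_le ((2 : ℝ) • innerₛₗ ℝ (y - x)).isLinear _

theorem closure_convexHull_subset_setOf_norm_sub_le {X : Set H} {x y : H}
    (hX : ∀ z ∈ X, ‖x - z‖ ≤ ‖y - z‖) :
    closure (convexHull ℝ X) ⊆ {z : H | ‖x - z‖ ≤ ‖y - z‖} :=
  closure_minimal (convexHull_min hX (convex_setOf_norm_sub_le_norm_sub x y))
    (isClosed_le (by fun_prop) (by fun_prop))

end HalfSpace

theorem stmt_0_general {H : Type*} [NormedAddCommGroup H] [InnerProductSpace ℝ H]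
    (X : Set H) (ξ : H)
    (h : ξ ∈ closure (convexHull ℝ X)) :
    ∀ η : H, ∃ ζ ∈ X, ‖ξ - ζ‖ ≤ ‖η - ζ‖ := by
  intro η
  by_contra! hcloser
  have hξ : ‖η - ξ‖ ≤ ‖ξ - ξ‖ :=
    closure_convexHull_subset_setOf_norm_sub_le (fun ζ hζ => (hcloser ζ hζ).le) h
  have hηξ : η = ξ := by simpa [sub_eq_zero] using hξ
  obtain ⟨ζ, hζ⟩ : X.Nonempty := convexHull_nonempty_iff.mp (closure_nonempty_iff.mp ⟨ξ, h⟩)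
  exact (hcloser ζ hζ).ne (by rw [hηξ])

theorem stmt_0 {H : Type*} [NormedAddCommGroup H] [InnerProductSpace ℝ H] [CompleteSpace H]
    (X : Set H) (hX : Bornology.IsBounded X) (ξ : H)
    (h : ξ ∈ closure (convexHull ℝ X)) :
    ∀ η : H, ∃ ζ ∈ X, ‖ξ - ζ‖ ≤ ‖η - ζ‖ :=
  stmt_0_general X ξ h
end

section
/- Let H be a real or complex Hilbert space, X ⊆ H a bounded set, ξ ∈ H, and Ω ⊆ H a dense set. If for every η ∈ Ω there exists ζ ∈ X with ‖ξ - ζ‖ ≤ ‖η - ζ‖, then ξ lies in the norm closure of the convex hull of X. -/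
open scoped InnerProductSpace

theorem stmt_1 {H : Type*} [NormedAddCommGroup H] [InnerProductSpace ℝ H] [CompleteSpace H]
    (X : Set H) (hX : Bornology.IsBounded X) (ξ : H) (Ω : Set H) (hΩ : Dense Ω)
    (h : ∀ η ∈ Ω, ∃ ζ ∈ X, ‖ξ - ζ‖ ≤ ‖η - ζ‖) :
    ξ ∈ closure (convexHull ℝ X) := by
  by_contra hc
  set C := closure (convexHull ℝ X) with hC
  -- X is nonempty
  obtain ⟨η₀, hη₀⟩ := hΩ.nonempty
  obtain ⟨ζ₀, hζ₀, -⟩ := h η₀ hη₀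
  have hCne : C.Nonempty := ⟨ζ₀, subset_closure (subset_convexHull ℝ X hζ₀)⟩
  have hCconv : Convex ℝ C := (convex_convexHull ℝ X).closure
  have hCcl : IsClosed C := isClosed_closure
  obtain ⟨p, hpC, hp⟩ := exists_norm_eq_iInf_of_complete_convex hCne hCcl.isComplete hCconv ξ
  have hinner : ∀ w ∈ C, ⟪ξ - p, w - p⟫_ℝ ≤ 0 :=
    (norm_eq_iInf_iff_real_inner_le_zero hCconv hpC).mp hp
  set d := ‖ξ - p‖ with hd
  have hd0 : 0 < d := by
    rw [hd, norm_pos_iff, sub_ne_zero]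
    rintro rfl; exact hc hpC
  -- bound
  obtain ⟨M, hM⟩ := hX.subset_closedBall p
  have hM0 : 0 ≤ M := by
    have := hM hζ₀
    simpa using (dist_nonneg.trans (Metric.mem_closedBall.mp this))
  -- key inequality: for ζ ∈ X, ‖ξ - ζ‖^2 ≥ ‖p - ζ‖^2 + d^2
  have key : ∀ ζ ∈ X, ‖p - ζ‖ ^ 2 + d ^ 2 ≤ ‖ξ - ζ‖ ^ 2 := by
    intro ζ hζ
    have hζC : ζ ∈ C := subset_closure (subset_convexHull ℝ X hζ)
    have hin : ⟪ξ - p, ζ - p⟫_ℝ ≤ 0 := hinner ζ hζC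
    have hexp : ‖ξ - ζ‖ ^ 2 = ‖ξ - p‖ ^ 2 + 2 * ⟪ξ - p, p - ζ⟫_ℝ + ‖p - ζ‖ ^ 2 := by
      have : ξ - ζ = (ξ - p) + (p - ζ) := by abel
      rw [this, ← norm_add_sq_real]
    have hswap : ⟪ξ - p, p - ζ⟫_ℝ = -⟪ξ - p, ζ - p⟫_ℝ := by
      rw [show p - ζ = -(ζ - p) by abel, inner_neg_right]
    nlinarith [hexp, hswap, hin]
  -- pick η ∈ Ω close to p
  have hden : 0 < 2 * M + 2 * d := by positivity
  set ε := min d (d ^ 2 / (2 * M + 2 * d)) with hε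
  have hε0 : 0 < ε := lt_min hd0 (by positivity)
  obtain ⟨η, hηΩ, hηp⟩ := hΩ.exists_dist_lt p hε0
  obtain ⟨ζ, hζX, hle⟩ := h η hηΩ
  have hb : ‖p - ζ‖ ≤ M := by
    have := Metric.mem_closedBall.mp (hM hζX)
    rwa [dist_comm, dist_eq_norm] at this
  have hεd : ε ≤ d := min_le_left _ _
  have hεq : ε ≤ d ^ 2 / (2 * M + 2 * d) := min_le_right _ _
  have hεq' : ε * (2 * M + 2 * d) ≤ d ^ 2 := by
    rw [div_eq_mul_inv] at hεq
    calc ε * (2 * M + 2 * d) ≤ d ^ 2 * (2 * M + 2 * d)⁻¹ * (2 * M + 2 * d) := by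
          exact mul_le_mul_of_nonneg_right hεq hden.le
      _ = d ^ 2 := by field_simp
  have hηζ : ‖η - ζ‖ ≤ ‖p - ζ‖ + ε := by
    calc ‖η - ζ‖ = ‖(η - p) + (p - ζ)‖ := by rw [sub_add_sub_cancel]
      _ ≤ ‖η - p‖ + ‖p - ζ‖ := norm_add_le _ _
      _ ≤ ε + ‖p - ζ‖ := by
          have : ‖η - p‖ < ε := by rwa [← dist_eq_norm, dist_comm]
          linarith
      _ = ‖p - ζ‖ + ε := by ring
  have h1 : ‖p - ζ‖ ^ 2 + d ^ 2 ≤ ‖ξ - ζ‖ ^ 2 := key ζ hζX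
  have h2 : ‖ξ - ζ‖ ^ 2 ≤ (‖p - ζ‖ + ε) ^ 2 := by
    have h0 : (0:ℝ) ≤ ‖η - ζ‖ := norm_nonneg _
    nlinarith [hle.trans hηζ, norm_nonneg (ξ - ζ)]
  have hb0 : (0:ℝ) ≤ ‖p - ζ‖ := norm_nonneg _
  nlinarith
end

section
/- Let H be a real or complex Hilbert space, X ⊆ H a bounded set, and ξ ∈ H. Then ξ belongs to the norm closure of the convex hull of X if and only if for every η ∈ H there exists ζ ∈ X such that ‖ξ - ζ‖ ≤ ‖η - ζ‖. -/
/-!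
If `ξ ∈ K = closure (convexHull ℝ X)` but every point of `X` were strictly closer to some `η` than
to `ξ`, then `convexHull ℝ X` would lie in the open half-space of points strictly closer to `η`,
and `K` in its closure; `ξ` lies in that closure only if `η = ξ`, and then the half-space is empty.
Conversely, if `ξ ∉ K`, the nearest point `p` of `K` to `ξ` satisfies `⟪ξ - p, z - p⟫ ≤ 0` on `K`,
which makes every `z ∈ K` strictly closer to `p` than to `ξ`; so `η = p` fails the condition.
-/

open RealInnerProductSpace

section

variable {E : Type*} [NormedAddCommGroup E] [InnerProductSpace ℝ E]

theorem norm_sub_sq_sub_norm_sub_sq (x y z : E) :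
    ‖x - z‖ ^ 2 - ‖y - z‖ ^ 2 = ‖x‖ ^ 2 - ‖y‖ ^ 2 - 2 * ⟪x - y, z⟫ := by
  rw [norm_sub_sq_real, norm_sub_sq_real, inner_sub_left]
  ring

theorem convex_setOf_norm_sub_lt_norm_sub (x y : E) :
    Convex ℝ {z | ‖y - z‖ < ‖x - z‖} := by
  have halfSpace : {z | ‖y - z‖ < ‖x - z‖} = {z | ⟪x - y, z⟫ < (‖x‖ ^ 2 - ‖y‖ ^ 2) / 2} := by
    ext z
    rw [Set.mem_ofPred_eq, Set.mem_ofPred_eq, ← sq_lt_sq₀ (norm_nonneg _) (norm_nonneg _)]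
    constructor <;> intro h <;> linarith [norm_sub_sq_sub_norm_sub_sq x y z]
  rw [halfSpace]
  exact convex_halfSpace_lt (innerₛₗ ℝ (x - y)).isLinear _

theorem norm_sub_lt_norm_sub_of_inner_nonpos {x p z : E} (hxp : x ≠ p)
    (h : ⟪x - p, z - p⟫ ≤ 0) : ‖p - z‖ < ‖x - z‖ := by
  have hpos : 0 < ‖x - p‖ := norm_pos_iff.2 (sub_ne_zero.2 hxp)
  have expand := norm_sub_sq_real (x - p) (z - p)
  rw [sub_sub_sub_cancel_right, norm_sub_rev z p] at expand
  exact (sq_lt_sq₀ (norm_nonneg _) (norm_nonneg _)).1 (by nlinarith)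

theorem Convex.exists_forall_norm_sub_lt_norm_sub_of_notMem {K : Set E} (hconv : Convex ℝ K)
    (hcomplete : IsComplete K) (hne : K.Nonempty) {x : E} (hx : x ∉ K) :
    ∃ p, ∀ z ∈ K, ‖p - z‖ < ‖x - z‖ := by
  obtain ⟨p, hpK, hp⟩ := exists_norm_eq_iInf_of_complete_convex hne hcomplete hconv x
  rw [norm_eq_iInf_iff_real_inner_le_zero hconv hpK] at hp
  exact ⟨p, fun z hz ↦ norm_sub_lt_norm_sub_of_inner_nonpos (fun h ↦ hx (h ▸ hpK)) (hp z hz)⟩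

theorem exists_norm_sub_le_of_mem_closure_convexHull {X : Set E} {ξ : E}
    (hξ : ξ ∈ closure (convexHull ℝ X)) (η : E) : ∃ ζ ∈ X, ‖ξ - ζ‖ ≤ ‖η - ζ‖ := by
  by_contra! hcloser
  have hhull : convexHull ℝ X ⊆ {z | ‖η - z‖ < ‖ξ - z‖} :=
    convexHull_min hcloser (convex_setOf_norm_sub_lt_norm_sub ξ η)
  have hclosure : closure (convexHull ℝ X) ⊆ {z | ‖η - z‖ ≤ ‖ξ - z‖} :=
    closure_minimal (hhull.trans fun z (hz : ‖η - z‖ < _) ↦ hz.le) (isClosed_le (by fun_prop) (by fun_prop))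
  have hηξ : η = ξ := by simpa [sub_eq_zero] using hclosure hξ
  subst hηξ
  obtain ⟨z, hz⟩ := closure_nonempty_iff.1 ⟨_, hξ⟩
  simpa using hhull hz

end

theorem stmt_2_general {H : Type*} [NormedAddCommGroup H] [InnerProductSpace ℝ H] [CompleteSpace H]
    (X : Set H) (ξ : H) :
    ξ ∈ closure (convexHull ℝ X) ↔ ∀ η : H, ∃ ζ ∈ X, ‖ξ - ζ‖ ≤ ‖η - ζ‖ := by
  refine ⟨exists_norm_sub_le_of_mem_closure_convexHull, fun h ↦ ?_⟩
  by_contra hξ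
  have hXK : X ⊆ closure (convexHull ℝ X) := (subset_convexHull ℝ X).trans subset_closure
  obtain ⟨ζ₀, hζ₀, -⟩ := h 0
  obtain ⟨p, hp⟩ := (convex_convexHull ℝ X).closure.exists_forall_norm_sub_lt_norm_sub_of_notMem
    isClosed_closure.isComplete ⟨ζ₀, hXK hζ₀⟩ hξ
  obtain ⟨ζ, hζ, hle⟩ := h p
  exact (hp ζ (hXK hζ)).not_ge hle

theorem stmt_2 {H : Type*} [NormedAddCommGroup H] [InnerProductSpace ℝ H] [CompleteSpace H]
    (X : Set H) (hX : Bornology.IsBounded X) (ξ : H) :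
    ξ ∈ closure (convexHull ℝ X) ↔ ∀ η : H, ∃ ζ ∈ X, ‖ξ - ζ‖ ≤ ‖η - ζ‖ :=
  stmt_2_general X ξ
end

section
/- Let H be a Hilbert space, ξ ∈ H, and let C ⊆ H be a nonempty closed convex bounded set with ξ ∉ C. Then there exists η ∈ H such that ‖η - ζ‖ < ‖ξ - ζ‖ for every ζ ∈ C. In fact η can be chosen in any dense subset Ω ⊆ H. -/
/-!
Let `p` be the metric projection of `ξ` onto `C` and `d = ‖ξ - p‖ > 0`. The obtuse angle at `p`
gives `‖p - ζ‖² + d² ≤ ‖ξ - ζ‖²` for `ζ ∈ C`, and since `‖ξ - ζ‖ + ‖p - ζ‖ ≤ d + 2 diam C`,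
the point `p` is closer than `ξ` to every `ζ ∈ C` by the uniform margin `d² / (d + 2 diam C)`.
Any `η ∈ Ω` within that margin of `p` then works.
-/

open RealInnerProductSpace Metric

lemma sq_div_le_sub_of_sq_add_sq_le {a b d K : ℝ} (ha : 0 ≤ a)
    (habd : b ^ 2 + d ^ 2 ≤ a ^ 2) (habK : a + b ≤ K) (hK : 0 < K) :
    d ^ 2 / K ≤ a - b := by
  have hba : b ≤ a := by nlinarith
  rw [div_le_iff₀ hK]
  nlinarith [mul_le_mul_of_nonneg_left habK (sub_nonneg.mpr hba)]

lemma norm_sub_sq_add_norm_sub_sq_le_of_inner_le_zero {E : Type*} [NormedAddCommGroup E]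
    [InnerProductSpace ℝ E] {ξ p ζ : E} (h : ⟪ξ - p, ζ - p⟫ ≤ 0) :
    ‖p - ζ‖ ^ 2 + ‖ξ - p‖ ^ 2 ≤ ‖ξ - ζ‖ ^ 2 := by
  have hsplit : ξ - ζ = (ξ - p) - (ζ - p) := by abel
  rw [norm_sub_rev p ζ, hsplit, norm_sub_sq_real (ξ - p) (ζ - p)]
  linarith

lemma exists_forall_norm_sub_add_le_norm_sub {E : Type*} [NormedAddCommGroup E]
    [InnerProductSpace ℝ E] [CompleteSpace E] {C : Set E} (hne : C.Nonempty) (hcl : IsClosed C)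
    (hconv : Convex ℝ C) (hbd : Bornology.IsBounded C) {ξ : E} (hξ : ξ ∉ C) :
    ∃ p, ∃ ε > 0, ∀ ζ ∈ C, ‖p - ζ‖ + ε ≤ ‖ξ - ζ‖ := by
  obtain ⟨p, hpC, hp⟩ := exists_norm_eq_iInf_of_complete_convex hne hcl.isComplete hconv ξ
  have hobtuse := (norm_eq_iInf_iff_real_inner_le_zero hconv hpC).mp hp
  have hd : 0 < ‖ξ - p‖ := norm_pos_iff.mpr (sub_ne_zero.mpr fun h ↦ hξ (h ▸ hpC))
  have hK : 0 < ‖ξ - p‖ + 2 * diam C := by positivity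
  refine ⟨p, ‖ξ - p‖ ^ 2 / (‖ξ - p‖ + 2 * diam C), by positivity, fun ζ hζ ↦ ?_⟩
  have hpζ : ‖p - ζ‖ ≤ diam C := by
    rw [← dist_eq_norm]
    exact dist_le_diam_of_mem hbd hpC hζ
  have hsum : ‖ξ - ζ‖ + ‖p - ζ‖ ≤ ‖ξ - p‖ + 2 * diam C := by
    linarith [norm_sub_le_norm_sub_add_norm_sub ξ p ζ]
  have hgap := sq_div_le_sub_of_sq_add_sq_le (norm_nonneg _)
    (norm_sub_sq_add_norm_sub_sq_le_of_inner_le_zero (hobtuse ζ hζ)) hsum hK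
  linarith

theorem stmt_3 {H : Type*} [NormedAddCommGroup H] [InnerProductSpace ℝ H] [CompleteSpace H]
    (C : Set H) (hne : C.Nonempty) (hcl : IsClosed C) (hconv : Convex ℝ C)
    (hbd : Bornology.IsBounded C) (ξ : H) (hξ : ξ ∉ C) (Ω : Set H) (hΩ : Dense Ω) :
    ∃ η ∈ Ω, ∀ ζ ∈ C, ‖η - ζ‖ < ‖ξ - ζ‖ := by
  obtain ⟨p, ε, hε, hmargin⟩ := exists_forall_norm_sub_add_le_norm_sub hne hcl hconv hbd hξ
  obtain ⟨η, hηp, hηΩ⟩ := hΩ.inter_open_nonempty (ball p ε) isOpen_ball (nonempty_ball.mpr hε)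
  refine ⟨η, hηΩ, fun ζ hζ ↦ ?_⟩
  rw [mem_ball, dist_eq_norm] at hηp
  linarith [norm_sub_le_norm_sub_add_norm_sub η p ζ, hmargin ζ hζ]
end

section
/- Let H be a Hilbert space, C ⊆ H a nonempty closed convex bounded set, ξ ∈ H with ξ ∉ C, and let η₀ be the metric projection of ξ onto C. If (ηₙ) is a sequence converging in norm to η₀ with ηₙ ≠ ξ for all n, then for all sufficiently large n, every ζ ∈ C satisfies ‖ηₙ - ζ‖ < ‖ξ - ζ‖. -/
open RealInnerProductSpace

theorem stmt_4 {H : Type*} [NormedAddCommGroup H] [InnerProductSpace ℝ H] [CompleteSpace H]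
    (C : Set H) (hne : C.Nonempty) (hcl : IsClosed C) (hconv : Convex ℝ C)
    (hbd : Bornology.IsBounded C) (ξ : H) (hξ : ξ ∉ C)
    (η₀ : H) (hη₀C : η₀ ∈ C) (hproj : ∀ ζ ∈ C, ‖ξ - η₀‖ ≤ ‖ξ - ζ‖)
    (η : ℕ → H) (hconv' : Filter.Tendsto η Filter.atTop (nhds η₀))
    (hne' : ∀ n, η n ≠ ξ) :
    ∃ N : ℕ, ∀ n ≥ N, ∀ ζ ∈ C, ‖η n - ζ‖ < ‖ξ - ζ‖ := by
  -- inner product characterization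
  have hinner : ∀ ζ ∈ C, ⟪ξ - η₀, ζ - η₀⟫ ≤ 0 := by
    rw [← norm_eq_iInf_iff_real_inner_le_zero hconv hη₀C]
    haveI : Nonempty C := ⟨⟨η₀, hη₀C⟩⟩
    apply le_antisymm
    · exact le_ciInf fun w => hproj w w.2
    · have hbdd : BddBelow (Set.range fun w : C => ‖ξ - (w : H)‖) := by
        refine ⟨0, ?_⟩
        rintro x ⟨w, rfl⟩
        exact norm_nonneg _
      exact ciInf_le hbdd ⟨η₀, hη₀C⟩
  set d : ℝ := ‖ξ - η₀‖ with hd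
  have hd0 : 0 < d := by
    rw [hd, norm_pos_iff, sub_ne_zero]
    exact fun h => hξ (h ▸ hη₀C)
  obtain ⟨r, hr⟩ := hbd.subset_closedBall η₀
  set M : ℝ := max r 0 with hM
  have hMb : ∀ ζ ∈ C, ‖η₀ - ζ‖ ≤ M := by
    intro ζ hζ
    have := hr hζ
    rw [Metric.mem_closedBall, dist_eq_norm] at this
    rw [← norm_neg, neg_sub]
    exact this.trans (le_max_left _ _)
  set ε : ℝ := min 1 (d ^ 2 / (2 * (2 * M + 1))) with hε
  have hM0 : (0 : ℝ) ≤ M := le_max_right _ _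
  have hden : 0 < 2 * (2 * M + 1) := by linarith
  have hε0 : 0 < ε := lt_min one_pos (div_pos (by positivity) hden)
  have hε1 : ε ≤ 1 := min_le_left _ _
  have hεd : ε * (2 * M + 1) < d ^ 2 := by
    have h1 : ε ≤ d ^ 2 / (2 * (2 * M + 1)) := min_le_right _ _
    have h2 : ε * (2 * (2 * M + 1)) ≤ d ^ 2 := (le_div_iff₀ hden).mp h1
    nlinarith
  rw [Metric.tendsto_atTop] at hconv'
  obtain ⟨N, hN⟩ := hconv' ε hε0
  refine ⟨N, fun n hn ζ hζ => ?_⟩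
  have hnε : ‖η n - η₀‖ ≤ ε := by
    have := hN n hn
    rw [dist_eq_norm] at this
    exact this.le
  set b : ℝ := ‖η₀ - ζ‖ with hb
  have hb0 : 0 ≤ b := norm_nonneg _
  have hbM : b ≤ M := hMb ζ hζ
  -- bound on ‖η n - ζ‖
  have h1 : ‖η n - ζ‖ ≤ ε + b := by
    calc ‖η n - ζ‖ = ‖(η n - η₀) + (η₀ - ζ)‖ := by rw [show η n - ζ = (η n - η₀) + (η₀ - ζ) by abel]
      _ ≤ ‖η n - η₀‖ + ‖η₀ - ζ‖ := norm_add_le _ _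
      _ ≤ ε + b := by linarith
  -- lower bound on ‖ξ - ζ‖²
  have h2 : d ^ 2 + b ^ 2 ≤ ‖ξ - ζ‖ ^ 2 := by
    have hexp : ‖ξ - ζ‖ ^ 2 = d ^ 2 + 2 * ⟪ξ - η₀, η₀ - ζ⟫ + b ^ 2 := by
      have : ξ - ζ = (ξ - η₀) + (η₀ - ζ) := by abel
      rw [this, hd, hb, norm_add_sq_real]
    have hi : ⟪ξ - η₀, η₀ - ζ⟫ ≥ 0 := by
      have := hinner ζ hζ
      rw [show η₀ - ζ = -(ζ - η₀) by abel, inner_neg_right]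
      linarith
    linarith
  have h3 : (ε + b) ^ 2 < d ^ 2 + b ^ 2 := by nlinarith
  have h4 : ‖η n - ζ‖ ^ 2 < ‖ξ - ζ‖ ^ 2 := by
    have : ‖η n - ζ‖ ^ 2 ≤ (ε + b) ^ 2 := by nlinarith [norm_nonneg (η n - ζ)]
    linarith
  exact lt_of_pow_lt_pow_left₀ 2 (norm_nonneg _) h4
end

section
/- Let X be a nonempty subset of ℝ, Ω ⊆ ℝ a dense set, and ξ ∈ ℝ. Then ξ belongs to the closure of the convex hull of X if and only if for every η ∈ Ω there exists ζ ∈ X such that |ξ - ζ| ≤ |η - ζ|. (No boundedness assumption on X is required.) -/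
theorem stmt_5 (X : Set ℝ) (hX : X.Nonempty) (Ω : Set ℝ) (hΩ : Dense Ω) (ξ : ℝ) :
    ξ ∈ closure (convexHull ℝ X) ↔ ∀ η ∈ Ω, ∃ ζ ∈ X, |ξ - ζ| ≤ |η - ζ| := by
  constructor
  · intro hmem η _
    by_contra hcon
    push_neg at hcon
    rcases lt_trichotomy η ξ with hlt | heq | hgt
    · -- X ⊆ Iio ((η+ξ)/2)
      have hsub : X ⊆ Set.Iio ((η + ξ) / 2) := by
        intro ζ hζ
        have := hcon ζ hζ
        rcases abs_cases (η - ζ) with ⟨h1, _⟩ | ⟨h1, _⟩ <;>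
          rcases abs_cases (ξ - ζ) with ⟨h2, _⟩ | ⟨h2, _⟩ <;>
          simp only [Set.mem_Iio] <;> nlinarith
      have h2 : convexHull ℝ X ⊆ Set.Iio ((η + ξ) / 2) :=
        convexHull_min hsub (convex_Iio _)
      have h3 : closure (convexHull ℝ X) ⊆ Set.Iic ((η + ξ) / 2) := by
        have := closure_mono h2
        rwa [closure_Iio] at this
      have := h3 hmem
      simp only [Set.mem_Iic] at this
      linarith
    · obtain ⟨ζ, hζ⟩ := hX
      have := hcon ζ hζ
      rw [heq] at this
      exact absurd this (lt_irrefl _)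
    · have hsub : X ⊆ Set.Ioi ((η + ξ) / 2) := by
        intro ζ hζ
        have := hcon ζ hζ
        rcases abs_cases (η - ζ) with ⟨h1, _⟩ | ⟨h1, _⟩ <;>
          rcases abs_cases (ξ - ζ) with ⟨h2, _⟩ | ⟨h2, _⟩ <;>
          simp only [Set.mem_Ioi] <;> nlinarith
      have h2 : convexHull ℝ X ⊆ Set.Ioi ((η + ξ) / 2) :=
        convexHull_min hsub (convex_Ioi _)
      have h3 : closure (convexHull ℝ X) ⊆ Set.Ici ((η + ξ) / 2) := by
        have := closure_mono h2
        rwa [closure_Ioi] at this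
      have := h3 hmem
      simp only [Set.mem_Ici] at this
      linarith
  · intro h
    by_contra hξ
    have hopen : IsOpen (closure (convexHull ℝ X))ᶜ := isClosed_closure.isOpen_compl
    obtain ⟨ε, hε, hball⟩ := Metric.isOpen_iff.1 hopen ξ hξ
    -- every ζ ∈ X is outside the ball
    have hside : ∀ ζ ∈ X, ζ ≤ ξ - ε ∨ ξ + ε ≤ ζ := by
      intro ζ hζ
      by_contra hc
      push_neg at hc
      have : ζ ∈ Metric.ball ξ ε := by
        rw [Metric.mem_ball, Real.dist_eq]
        rcases abs_cases (ζ - ξ) with ⟨h1, _⟩ | ⟨h1, _⟩ <;> linarith [hc.1, hc.2]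
      exact hball this (subset_closure (subset_convexHull ℝ X hζ))
    obtain ⟨ζ₀, hζ₀⟩ := hX
    have hξball : ξ ∈ Metric.ball ξ ε := Metric.mem_ball_self hε
    have hseg : ∀ a ∈ X, ∀ b ∈ X, a ≤ ξ → ξ ≤ b → False := by
      intro a ha b hb hab hbb
      have : ξ ∈ convexHull ℝ X := by
        have := (convex_convexHull ℝ X).segment_subset
          (subset_convexHull ℝ X ha) (subset_convexHull ℝ X hb)
        apply this
        rw [segment_eq_Icc (le_trans hab hbb)]
        exact ⟨hab, hbb⟩
      exact hball hξball (subset_closure this)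
    rcases hside ζ₀ hζ₀ with h0 | h0
    · -- all of X is ≤ ξ - ε
      have hall : ∀ ζ ∈ X, ζ ≤ ξ - ε := by
        intro ζ hζ
        rcases hside ζ hζ with h1 | h1
        · exact h1
        · exact absurd (hseg ζ₀ hζ₀ ζ hζ (by linarith) (by linarith)) (by simp)
      obtain ⟨η, hηΩ, hηI⟩ := hΩ.exists_mem_open isOpen_Ioo
        (Set.nonempty_Ioo.2 (show ξ - ε < ξ by linarith))
      obtain ⟨ζ, hζX, habs⟩ := h η hηΩ
      have hζle := hall ζ hζX
      obtain ⟨hη1, hη2⟩ := hηI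
      rcases abs_cases (ξ - ζ) with ⟨h1, _⟩ | ⟨h1, _⟩ <;>
        rcases abs_cases (η - ζ) with ⟨h2, _⟩ | ⟨h2, _⟩ <;> linarith
    · -- all of X is ≥ ξ + ε
      have hall : ∀ ζ ∈ X, ξ + ε ≤ ζ := by
        intro ζ hζ
        rcases hside ζ hζ with h1 | h1
        · exact absurd (hseg ζ hζ ζ₀ hζ₀ (by linarith) (by linarith)) (by simp)
        · exact h1
      obtain ⟨η, hηΩ, hηI⟩ := hΩ.exists_mem_open isOpen_Ioo
        (Set.nonempty_Ioo.2 (show ξ < ξ + ε by linarith))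
      obtain ⟨ζ, hζX, habs⟩ := h η hηΩ
      have hζle := hall ζ hζX
      obtain ⟨hη1, hη2⟩ := hηI
      rcases abs_cases (ξ - ζ) with ⟨h1, _⟩ | ⟨h1, _⟩ <;>
        rcases abs_cases (η - ζ) with ⟨h2, _⟩ | ⟨h2, _⟩ <;> linarith
end

section
/- In ℝ² (or any real Hilbert space of dimension at least 2), there exist a nonempty closed convex set X, a dense set Ω, and a point ξ ∉ X such that for every η ∈ Ω there exists ζ ∈ X with ‖ξ - ζ‖ < ‖η - ζ‖. Concretely, one may take X = {(x₁, x₂) : x₁ ≤ 0}, ξ = (1,0), and Ω = ℝ² \ ℝξ. -/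
theorem stmt_6 :
    ∃ (X Ω : Set (EuclideanSpace ℝ (Fin 2))) (ξ : EuclideanSpace ℝ (Fin 2)),
      X.Nonempty ∧ IsClosed X ∧ Convex ℝ X ∧ Dense Ω ∧ ξ ∉ X ∧
      ∀ η ∈ Ω, ∃ ζ ∈ X, ‖ξ - ζ‖ < ‖η - ζ‖ := by
  refine ⟨{x | x 0 ≤ 0}, {x | x 1 ≠ 0}, EuclideanSpace.single 0 1,
    ⟨0, by simp⟩, ?_, ?_, ?_, ?_, ?_⟩
  · exact isClosed_le (EuclideanSpace.proj (0 : Fin 2)).continuous continuous_const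
  · exact convex_halfSpace_le ⟨fun x y => rfl, fun c x => rfl⟩ 0
  · rw [Metric.dense_iff]
    intro x ε hε
    by_cases h : x 1 ≠ 0
    · exact ⟨x, Metric.mem_ball_self hε, h⟩
    · refine ⟨x + EuclideanSpace.single 1 (ε / 2), ?_, ?_⟩
      · rw [Metric.mem_ball, dist_eq_norm]
        simp [EuclideanSpace.norm_single, abs_of_pos hε]
        linarith
      · simp [not_not.mp h]
        positivity
  · simp
  · intro η hη
    simp only [Set.mem_setOf_eq] at hη
    refine ⟨EuclideanSpace.single 1 (-(η 1)⁻¹), by simp, ?_⟩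
    have hlt : ‖EuclideanSpace.single (0 : Fin 2) (1:ℝ) - EuclideanSpace.single 1 (-(η 1)⁻¹)‖ ^ 2
        < ‖η - EuclideanSpace.single 1 (-(η 1)⁻¹)‖ ^ 2 := by
      rw [EuclideanSpace.norm_eq, EuclideanSpace.norm_eq, Real.sq_sqrt (by positivity),
        Real.sq_sqrt (by positivity)]
      simp [Fin.sum_univ_two, EuclideanSpace.single_apply, sub_sq]
      have h2 : η 1 * (η 1)⁻¹ = 1 := mul_inv_cancel₀ hη
      nlinarith [sq_nonneg (η 0), sq_nonneg (η 1), sq_nonneg ((η 1)⁻¹)]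
    exact lt_of_pow_lt_pow_left₀ 2 (norm_nonneg _) hlt
end

section
/- Let H be a Hilbert space and X ⊆ Y ⊆ H a projection closed pair with X nonempty, i.e., for every y ∈ Y the metric projection of y onto the norm closure of conv X lies in Y. Let ξ ∈ Y. Then ξ belongs to the norm closure of conv X if and only if for every η ∈ Y there exists ζ ∈ X such that ‖ξ - ζ‖ ≤ ‖η - ζ‖. -/
open RealInnerProductSpace

theorem stmt_8 {H : Type*} [NormedAddCommGroup H] [InnerProductSpace ℝ H] [CompleteSpace H]
    (X Y : Set H) (hXY : X ⊆ Y) (hXne : X.Nonempty)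
    (hprojcl : ∀ y ∈ Y, ∀ p ∈ closure (convexHull ℝ X),
      (∀ ζ ∈ closure (convexHull ℝ X), ‖y - p‖ ≤ ‖y - ζ‖) → p ∈ Y)
    (ξ : H) (hξ : ξ ∈ Y) :
    ξ ∈ closure (convexHull ℝ X) ↔ ∀ η ∈ Y, ∃ ζ ∈ X, ‖ξ - ζ‖ ≤ ‖η - ζ‖ := by
  set K := closure (convexHull ℝ X) with hK
  have hXK : X ⊆ K := (subset_convexHull ℝ X).trans subset_closure
  constructor
  · intro hξK η _
    by_contra hcon
    push_neg at hcon
    set v := ξ - η with hv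
    set c := (‖ξ‖ ^ 2 - ‖η‖ ^ 2) / 2 with hc
    have hX' : ∀ z ∈ X, ⟪v, z⟫ < c := by
      intro z hz
      have h1 : ‖η - z‖ < ‖ξ - z‖ := hcon z hz
      have h2 : ‖η - z‖ ^ 2 < ‖ξ - z‖ ^ 2 := by
        have := norm_nonneg (η - z)
        nlinarith
      have e1 : ‖η - z‖ ^ 2 = ‖η‖ ^ 2 - 2 * ⟪η, z⟫ + ‖z‖ ^ 2 := by
        rw [← real_inner_self_eq_norm_sq, inner_sub_sub_self]
        rw [real_inner_self_eq_norm_sq, real_inner_self_eq_norm_sq, real_inner_comm]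
        ring
      have e2 : ‖ξ - z‖ ^ 2 = ‖ξ‖ ^ 2 - 2 * ⟪ξ, z⟫ + ‖z‖ ^ 2 := by
        rw [← real_inner_self_eq_norm_sq, inner_sub_sub_self]
        rw [real_inner_self_eq_norm_sq, real_inner_self_eq_norm_sq, real_inner_comm]
        ring
      have : ⟪v, z⟫ = ⟪ξ, z⟫ - ⟪η, z⟫ := by rw [hv, inner_sub_left]
      rw [this, hc]; nlinarith
    have hlin : IsLinearMap ℝ (fun z : H => ⟪v, z⟫) :=
      ⟨fun x y => inner_add_right _ _ _, fun r x => real_inner_smul_right _ _ _⟩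
    have hconv : convexHull ℝ X ⊆ {z | ⟪v, z⟫ < c} :=
      convexHull_min hX' (convex_halfSpace_lt hlin c)
    have hclosed : IsClosed {z : H | ⟪v, z⟫ ≤ c} :=
      isClosed_le (Continuous.inner continuous_const continuous_id) continuous_const
    have hcl : K ⊆ {z | ⟪v, z⟫ ≤ c} :=
      closure_minimal (fun z hz => show (⟪v, z⟫ : ℝ) ≤ c from le_of_lt (hconv hz)) hclosed
    have hξc : ⟪v, ξ⟫ ≤ c := hcl hξK
    have hvv : ⟪v, ξ⟫ = ‖ξ‖ ^ 2 - ⟪η, ξ⟫ := by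
      rw [hv, inner_sub_left, real_inner_self_eq_norm_sq]
    have hnn : ‖ξ - η‖ ^ 2 ≤ 0 := by
      have e : ‖ξ - η‖ ^ 2 = ‖ξ‖ ^ 2 - 2 * ⟪ξ, η⟫ + ‖η‖ ^ 2 := by
        rw [← real_inner_self_eq_norm_sq, inner_sub_sub_self]
        rw [real_inner_self_eq_norm_sq, real_inner_self_eq_norm_sq, real_inner_comm]
        ring
      rw [e]
      have : ⟪η, ξ⟫ = ⟪ξ, η⟫ := real_inner_comm _ _
      nlinarith [hξc, hvv, hc]
    have hξη : ξ = η := by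
      have := sq_nonneg ‖ξ - η‖
      have h0 : ‖ξ - η‖ = 0 := by nlinarith [norm_nonneg (ξ - η)]
      rwa [norm_sub_eq_zero_iff] at h0
    obtain ⟨z, hz⟩ := hXne
    have := hcon z hz
    rw [hξη] at this
    exact lt_irrefl _ this
  · intro hcond
    have hKne : K.Nonempty := hXne.mono hXK
    have hKcomplete : IsComplete K := isClosed_closure.isComplete
    have hKconv : Convex ℝ K := (convex_convexHull ℝ X).closure
    obtain ⟨p, hpK, hpmin⟩ :=
      exists_norm_eq_iInf_of_complete_convex hKne
        hKcomplete hKconv ξ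
    have hple : ∀ z ∈ K, ‖ξ - p‖ ≤ ‖ξ - z‖ := by
      intro z hz
      rw [hpmin]
      exact ciInf_le (f := fun w : K => ‖ξ - (w : H)‖)
        ⟨0, by rintro x ⟨w, rfl⟩; exact norm_nonneg _⟩ ⟨z, hz⟩
    have hpY : p ∈ Y := hprojcl ξ hξ p hpK hple
    obtain ⟨ζ, hζX, hζ⟩ := hcond p hpY
    have hangle : ∀ w ∈ K, ⟪ξ - p, w - p⟫ ≤ 0 :=
      (norm_eq_iInf_iff_real_inner_le_zero hKconv hpK).mp hpmin
    have hζK : ζ ∈ K := hXK hζX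
    have ha : ⟪ξ - p, ζ - p⟫ ≤ 0 := hangle ζ hζK
    -- ‖ξ - ζ‖² = ‖ξ - p‖² + ‖p - ζ‖² - 2⟪ξ-p, ζ-p⟫
    have key : ‖ξ - ζ‖ ^ 2 = ‖ξ - p‖ ^ 2 + ‖p - ζ‖ ^ 2 - 2 * ⟪ξ - p, ζ - p⟫ := by
      have : ξ - ζ = (ξ - p) - (ζ - p) := by abel
      rw [this, ← real_inner_self_eq_norm_sq, inner_sub_sub_self,
        real_inner_self_eq_norm_sq, real_inner_self_eq_norm_sq]
      have : ‖ζ - p‖ = ‖p - ζ‖ := norm_sub_rev _ _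
      rw [this, real_inner_comm (ζ - p) (ξ - p)]; ring
    have h2 : ‖ξ - ζ‖ ^ 2 ≤ ‖p - ζ‖ ^ 2 := by
      have := norm_nonneg (ξ - ζ); have := norm_nonneg (p - ζ); nlinarith
    have hξp : ‖ξ - p‖ ^ 2 ≤ 0 := by nlinarith
    have : ξ = p := by
      have := sq_nonneg ‖ξ - p‖
      have h0 : ‖ξ - p‖ = 0 := by nlinarith [norm_nonneg (ξ - p)]
      rwa [norm_sub_eq_zero_iff] at h0
    rw [this]; exact hpK
end

section
/- Let A, B ∈ Mₙ(ℂ). If for every C ∈ Mₙ(ℂ) there exists a unitary matrix U with ‖A - U B U*‖₂ ≤ ‖C - U B U*‖₂ (Frobenius norm), then A lies in the closure of the convex hull of the unitary orbit {U B U* : U unitary} of B. -/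
/-!
Let `K` be the closed convex hull of the orbit, identified with a closed convex subset of a
Euclidean space, and suppose `A ∉ K`. Let `V` be the point of `K` nearest to `A`. Every point `M`
of `K` makes an obtuse angle `A V M` at `V`, so `M` is strictly closer to `V` than to `A`. The
hypothesis applied to `C = V` yields a point of the orbit that is at least as close to `A` as to
`V`, which is a contradiction.
-/

open Matrix

/-- The Frobenius (Hilbert–Schmidt) norm of a complex matrix. -/
noncomputable def frobNorm {n : ℕ} (M : Matrix (Fin n) (Fin n) ℂ) : ℝ :=
  Real.sqrt ((Mᴴ * M).trace.re)

theorem mem_closure_convexHull_of_forall_exists_norm_sub_le {E : Type*} [NormedAddCommGroup E]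
    [InnerProductSpace ℝ E] [CompleteSpace E] {s : Set E} {a : E}
    (h : ∀ c, ∃ m ∈ s, ‖a - m‖ ≤ ‖c - m‖) : a ∈ closure (convexHull ℝ s) := by
  set K := closure (convexHull ℝ s)
  have hK : Convex ℝ K := (convex_convexHull ℝ s).closure
  have hsK : s ⊆ K := (subset_convexHull ℝ s).trans subset_closure
  obtain ⟨m₀, hm₀, -⟩ := h 0
  obtain ⟨v, hvK, hv⟩ := exists_norm_eq_iInf_of_complete_convex ⟨m₀, hsK hm₀⟩
    isClosed_closure.isComplete hK a
  obtain ⟨m, hm, hle⟩ := h v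
  by_contra haK
  have hav : 0 < ‖a - v‖ := norm_pos_iff.2 (sub_ne_zero.2 fun hav => haK (hav ▸ hvK))
  have hobtuse : inner ℝ (a - v) (m - v) ≤ 0 :=
    (norm_eq_iInf_iff_real_inner_le_zero hK hvK).1 hv m (hsK hm)
  have hexpand := norm_sub_sq_real (a - v) (m - v)
  rw [sub_sub_sub_cancel_right, norm_sub_rev m v] at hexpand
  nlinarith [norm_nonneg (a - m), norm_nonneg (v - m)]

theorem ContinuousLinearEquiv.image_closure_convexHull {𝕜 E F : Type*} [Ring 𝕜] [PartialOrder 𝕜]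
    [AddCommGroup E] [Module 𝕜 E] [TopologicalSpace E]
    [AddCommGroup F] [Module 𝕜 F] [TopologicalSpace F] (φ : E ≃L[𝕜] F) (s : Set E) :
    φ '' closure (convexHull 𝕜 s) = closure (convexHull 𝕜 (φ '' s)) := by
  rw [φ.image_closure]
  exact congrArg closure ((φ : E →L[𝕜] F).toLinearMap.image_convexHull s)

noncomputable def Matrix.toEuclideanSpace (m n : Type*) [Fintype m] [Fintype n] :
    Matrix m n ℂ ≃L[ℝ] EuclideanSpace ℂ (m × n) :=
  ((LinearEquiv.curry ℝ ℂ m n).symm.trans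
    (WithLp.linearEquiv 2 ℝ (m × n → ℂ)).symm).toContinuousLinearEquiv

theorem Matrix.re_trace_conjTranspose_mul_self {m n : Type*} [Fintype m] [Fintype n]
    (M : Matrix m n ℂ) : (Mᴴ * M).trace.re = ∑ i, ∑ j, ‖M i j‖ ^ 2 := by
  rw [Finset.sum_comm]
  simp [Matrix.trace, Matrix.mul_apply, Complex.re_sum, Complex.conj_mul', ← Complex.ofReal_pow]

theorem frobNorm_eq_norm_toEuclideanSpace {n : ℕ} (M : Matrix (Fin n) (Fin n) ℂ) :
    frobNorm M = ‖Matrix.toEuclideanSpace _ _ M‖ := by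
  rw [frobNorm, EuclideanSpace.norm_eq, re_trace_conjTranspose_mul_self,
    Fintype.sum_prod_type]
  rfl

theorem stmt_10 {n : ℕ} (A B : Matrix (Fin n) (Fin n) ℂ)
    (h : ∀ C : Matrix (Fin n) (Fin n) ℂ, ∃ U ∈ Matrix.unitaryGroup (Fin n) ℂ,
      frobNorm (A - U * B * star U) ≤ frobNorm (C - U * B * star U)) :
    A ∈ closure (convexHull ℝ
      {M | ∃ U ∈ Matrix.unitaryGroup (Fin n) ℂ, M = U * B * star U}) := by
  set φ := Matrix.toEuclideanSpace (Fin n) (Fin n)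
  set orbit := {M | ∃ U ∈ Matrix.unitaryGroup (Fin n) ℂ, M = U * B * star U}
  have hφA : φ A ∈ closure (convexHull ℝ (φ '' orbit)) :=
    mem_closure_convexHull_of_forall_exists_norm_sub_le fun c => by
      obtain ⟨U, hU, hle⟩ := h (φ.symm c)
      refine ⟨φ (U * B * star U), ⟨_, ⟨U, hU, rfl⟩, rfl⟩, ?_⟩
      rwa [frobNorm_eq_norm_toEuclideanSpace, frobNorm_eq_norm_toEuclideanSpace, map_sub, map_sub,
        φ.apply_symm_apply] at hle
  rwa [← φ.image_closure_convexHull, φ.injective.mem_set_image] at hφA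
end

section
/- Let A, B ∈ Mₙ(ℂ). If A lies in the convex hull of the unitary orbit {U B U* : U unitary} of B, then for every C ∈ Mₙ(ℂ) there exists a unitary U with ‖A - U B U*‖₂ ≤ ‖C - U B U*‖₂, where ‖·‖₂ is the Frobenius norm. -/
open Matrix

noncomputable def gF {n : ℕ} (X : Matrix (Fin n) (Fin n) ℂ) : ℝ := ((Xᴴ * X).trace.re)

lemma gF_eq {n : ℕ} (X : Matrix (Fin n) (Fin n) ℂ) :
    gF X = ∑ i : Fin n, ∑ j : Fin n, Complex.normSq (X j i) := by
  unfold gF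
  rw [Matrix.trace, Complex.re_sum]
  apply Finset.sum_congr rfl
  intro i _
  rw [Matrix.diag_apply, Matrix.mul_apply, Complex.re_sum]
  apply Finset.sum_congr rfl
  intro j _
  simp [Matrix.conjTranspose_apply, Complex.normSq_apply, Complex.mul_re]

lemma gF_nonneg {n : ℕ} (X : Matrix (Fin n) (Fin n) ℂ) : 0 ≤ gF X := by
  rw [gF_eq]
  apply Finset.sum_nonneg
  intro i _
  apply Finset.sum_nonneg
  intro j _
  exact Complex.normSq_nonneg _

lemma frob_eq {n : ℕ} (X : Matrix (Fin n) (Fin n) ℂ) : frobNorm X = Real.sqrt (gF X) := rfl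

theorem stmt_11 {n : ℕ} (A B : Matrix (Fin n) (Fin n) ℂ)
    (h : A ∈ convexHull ℝ {M | ∃ U ∈ Matrix.unitaryGroup (Fin n) ℂ, M = U * B * star U}) :
    ∀ C : Matrix (Fin n) (Fin n) ℂ, ∃ U ∈ Matrix.unitaryGroup (Fin n) ℂ,
      frobNorm (A - U * B * star U) ≤ frobNorm (C - U * B * star U) := by
  intro C
  by_contra hc
  push_neg at hc
  set f : Matrix (Fin n) (Fin n) ℂ → ℝ := fun M => gF (C - M) - gF (A - M) with hf
  have fsum : ∀ M, f M = ∑ i : Fin n, ∑ j : Fin n,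
      (Complex.normSq ((C - M) j i) - Complex.normSq ((A - M) j i)) := by
    intro M
    simp only [hf, gF_eq, Finset.sum_sub_distrib]
  have faff : ∀ (a b : ℝ), a + b = 1 → ∀ M₁ M₂,
      f (a • M₁ + b • M₂) = a * f M₁ + b * f M₂ := by
    intro a b hab M₁ M₂
    have hb : b = 1 - a := by linarith
    subst hb
    rw [fsum, fsum, fsum, Finset.mul_sum, Finset.mul_sum, ← Finset.sum_add_distrib]
    apply Finset.sum_congr rfl
    intro i _
    rw [Finset.mul_sum, Finset.mul_sum, ← Finset.sum_add_distrib]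
    apply Finset.sum_congr rfl
    intro j _
    simp only [Matrix.sub_apply, Matrix.add_apply, Matrix.smul_apply, Complex.normSq_apply,
      Complex.sub_re, Complex.sub_im, Complex.add_re, Complex.add_im,
      Complex.real_smul, Complex.mul_re, Complex.mul_im, Complex.ofReal_re, Complex.ofReal_im]
    ring
  have hconv : Convex ℝ {M : Matrix (Fin n) (Fin n) ℂ | f M < 0} := by
    intro M₁ h₁ M₂ h₂ a b ha hb hab
    simp only [Set.mem_setOf_eq] at h₁ h₂ ⊢
    rw [faff a b hab]
    rcases eq_or_lt_of_le ha with h0 | h0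
    · have : b = 1 := by linarith
      simp [← h0, this, h₂]
    · nlinarith
  have hsub : {M : Matrix (Fin n) (Fin n) ℂ | ∃ U ∈ Matrix.unitaryGroup (Fin n) ℂ,
      M = U * B * star U} ⊆ {M | f M < 0} := by
    rintro M ⟨U, hU, rfl⟩
    have hlt := hc U hU
    simp only [Set.mem_setOf_eq, hf, sub_neg]
    by_contra hle
    push_neg at hle
    have := Real.sqrt_le_sqrt hle
    rw [← frob_eq, ← frob_eq] at this
    exact absurd this (not_le.mpr hlt)
  have hA := convexHull_min hsub hconv h
  simp only [Set.mem_setOf_eq, hf] at hA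
  have h1 : gF (A - A) = 0 := by
    simp [gF_eq]
  have h2 := gF_nonneg (C - A)
  linarith
end

section
/- Let A, B ∈ Mₙ(ℂ). The following are equivalent: (1) there exist unitary matrices U₁, …, U_k and positive reals t₁, …, t_k with Σ tᵢ = 1 and A = Σ tᵢ Uᵢ B Uᵢ*; (2) for every C ∈ Mₙ(ℂ) there exists a unitary U with ‖A - U B U*‖₂ ≤ ‖C - U B U*‖₂, where ‖·‖₂ denotes the Frobenius norm. -/
/-!
Condition (1) says that `A` lies in the convex hull of the unitary orbit of `B`, and the
Frobenius norm makes `Mₙ(ℂ)` a real Euclidean space. For points `a`, `c` of a real inner product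
space, `{p | ‖c - p‖ < ‖a - p‖}` is an open half-space. If `a` is in the hull of the orbit but
(2) failed for some `c`, then the orbit and hence its hull would lie in that half-space, which
would give `‖c - a‖ < 0`. Conversely, the orbit is compact, hence so is its hull (Carathéodory).
If `c` is the point of the hull nearest to `a`, then `⟪a - c, p - c⟫ ≤ 0` for every `p` in the
hull, so a `p` in the orbit with `‖a - p‖ ≤ ‖c - p‖` forces `a = c`.
-/

open Matrix

open RealInnerProductSpace

section InnerProductSpace

variable {E : Type*} [NormedAddCommGroup E] [InnerProductSpace ℝ E]

theorem convex_setOf_norm_sub_lt_norm_sub_s12 (a b : E) : Convex ℝ {p | ‖a - p‖ < ‖b - p‖} := by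
  have h : {p | ‖a - p‖ < ‖b - p‖} = {p | ⟪b - a, p⟫ < (‖b‖ ^ 2 - ‖a‖ ^ 2) / 2} := by
    ext p
    rw [Set.mem_ofPred_eq, Set.mem_ofPred_eq, ← sq_lt_sq₀ (norm_nonneg _) (norm_nonneg _),
      norm_sub_sq_real, norm_sub_sq_real, inner_sub_left]
    constructor <;> intro <;> linarith
  rw [h]
  exact convex_halfSpace_lt (innerₛₗ ℝ (b - a)).isLinear _

theorem exists_norm_sub_le_of_mem_convexHull {s : Set E} {x : E} (hx : x ∈ convexHull ℝ s)
    (c : E) : ∃ p ∈ s, ‖x - p‖ ≤ ‖c - p‖ := by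
  by_contra! h
  have hcx : ‖c - x‖ < ‖x - x‖ := convexHull_min h (convex_setOf_norm_sub_lt_norm_sub_s12 c x) hx
  exact (norm_nonneg _).not_gt (by rwa [sub_self, norm_zero] at hcx)

theorem mem_convexHull_of_forall_exists_norm_sub_le {s : Set E} (hs : IsComplete (convexHull ℝ s))
    {x : E} (h : ∀ c, ∃ p ∈ s, ‖x - p‖ ≤ ‖c - p‖) : x ∈ convexHull ℝ s := by
  obtain ⟨p₀, hp₀, -⟩ := h x
  obtain ⟨c, hc, hmin⟩ := exists_norm_eq_iInf_of_complete_convex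
    ⟨p₀, subset_convexHull ℝ s hp₀⟩ hs (convex_convexHull ℝ s) x
  have hobtuse := (norm_eq_iInf_iff_real_inner_le_zero (convex_convexHull ℝ s) hc).mp hmin
  obtain ⟨p, hp, hle⟩ := h c
  have hpc : ⟪x - c, p - c⟫ ≤ 0 := hobtuse p (subset_convexHull ℝ s hp)
  have hsplit : ‖x - p‖ ^ 2 = ‖x - c‖ ^ 2 - 2 * ⟪x - c, p - c⟫ + ‖c - p‖ ^ 2 := by
    rw [← sub_sub_sub_cancel_right x p c, norm_sub_sq_real, ← neg_sub p c, norm_neg]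
  have hle_sq : ‖x - p‖ ^ 2 ≤ ‖c - p‖ ^ 2 := by gcongr
  have hxc : ‖x - c‖ = 0 := by nlinarith [norm_nonneg (x - c)]
  rwa [norm_sub_eq_zero_iff.mp hxc]

theorem mem_convexHull_iff_forall_exists_norm_sub_le {s : Set E}
    (hs : IsComplete (convexHull ℝ s)) {x : E} :
    x ∈ convexHull ℝ s ↔ ∀ c, ∃ p ∈ s, ‖x - p‖ ≤ ‖c - p‖ :=
  ⟨exists_norm_sub_le_of_mem_convexHull, mem_convexHull_of_forall_exists_norm_sub_le hs⟩

end InnerProductSpace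

open Module

section FiniteDimensional

variable {𝕜 E : Type*} [Field 𝕜] [LinearOrder 𝕜] [IsStrictOrderedRing 𝕜] [AddCommGroup E]
  [Module 𝕜 E] [FiniteDimensional 𝕜 E]

theorem exists_mem_stdSimplex_fin_of_mem_convexHull {s : Set E} (hs : s.Nonempty) {x : E}
    (hx : x ∈ convexHull 𝕜 s) :
    ∃ w ∈ stdSimplex 𝕜 (Fin (finrank 𝕜 E + 1)), ∃ z : Fin (finrank 𝕜 E + 1) → E,
      (∀ i, z i ∈ s) ∧ ∑ i, w i • z i = x := by
  obtain ⟨ι, _, z, w, hzs, hai, hw0, hw1, rfl⟩ := eq_pos_convex_span_of_mem_convexHull hx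
  obtain ⟨e⟩ : Nonempty (ι ↪ Fin (finrank 𝕜 E + 1)) :=
    Function.Embedding.nonempty_of_card_le <| by
      simpa using hai.card_le_finrank_succ.trans (Nat.add_le_add_right (Submodule.finrank_le _) 1)
  obtain ⟨s₀, hs₀⟩ := hs
  refine ⟨Function.extend e w fun _ => 0, ⟨fun j => ?_, ?_⟩, Function.extend e z fun _ => s₀,
    fun j => ?_, ?_⟩
  · by_cases hj : j ∈ Set.range e
    · obtain ⟨i, rfl⟩ := hj
      exact e.injective.extend_apply w 0 i ▸ (hw0 i).le
    · exact (Function.extend_apply' w (fun _ => 0) j hj).ge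
  · rw [← hw1]
    exact (Fintype.sum_of_injective e e.injective _ _ (fun j hj => Function.extend_apply' w _ j hj)
      fun i => (e.injective.extend_apply _ _ i).symm).symm
  · by_cases hj : j ∈ Set.range e
    · obtain ⟨i, rfl⟩ := hj
      exact e.injective.extend_apply z _ i ▸ hzs (Set.mem_range_self i)
    · exact Function.extend_apply' z _ j hj ▸ hs₀
  · refine (Fintype.sum_of_injective e e.injective _ _ (fun j hj => ?_) fun i => ?_).symm
    · rw [Function.extend_apply' w _ j hj, zero_smul]
    · rw [e.injective.extend_apply, e.injective.extend_apply]

end FiniteDimensional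

theorem isCompact_convexHull {E : Type*} [NormedAddCommGroup E] [NormedSpace ℝ E]
    [FiniteDimensional ℝ E] {s : Set E} (hs : IsCompact s) : IsCompact (convexHull ℝ s) := by
  rcases s.eq_empty_or_nonempty with rfl | hne
  · simp
  set D := finrank ℝ E + 1
  have hhull : convexHull ℝ s = (fun q : (Fin D → ℝ) × (Fin D → E) => ∑ i, q.1 i • q.2 i) ''
      (stdSimplex ℝ (Fin D) ×ˢ Set.univ.pi fun _ => s) := by
    refine subset_antisymm (fun x hx => ?_) ?_
    · obtain ⟨w, hw, z, hz, rfl⟩ := exists_mem_stdSimplex_fin_of_mem_convexHull hne hx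
      exact ⟨(w, z), ⟨hw, fun i _ => hz i⟩, rfl⟩
    · rintro _ ⟨⟨w, z⟩, ⟨hw, hz⟩, rfl⟩
      exact mem_convexHull_of_exists_fintype w z hw.1 hw.2 (fun i => hz i trivial) rfl
  rw [hhull]
  exact ((isCompact_stdSimplex ℝ _).prod (isCompact_univ_pi fun _ => hs)).image (by fun_prop)

theorem mem_convexHull_image_iff_exists_fin {𝕜 E α : Type*} [Field 𝕜] [LinearOrder 𝕜]
    [IsStrictOrderedRing 𝕜] [AddCommGroup E] [Module 𝕜 E] {f : α → E} {S : Set α} {x : E} :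
    x ∈ convexHull 𝕜 (f '' S) ↔ ∃ (k : ℕ) (u : Fin k → α) (t : Fin k → 𝕜),
      (∀ i, u i ∈ S) ∧ (∀ i, 0 < t i) ∧ ∑ i, t i = 1 ∧ x = ∑ i, t i • f (u i) := by
  constructor
  · intro hx
    obtain ⟨ι, _, z, w, hzS, -, hw0, hw1, rfl⟩ := eq_pos_convex_span_of_mem_convexHull hx
    choose u hu hfu using fun i => hzS (Set.mem_range_self i)
    let σ := (Fintype.equivFin ι).symm
    refine ⟨_, u ∘ σ, w ∘ σ, fun i => hu _, fun i => hw0 _, ?_, ?_⟩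
    · exact (Equiv.sum_comp σ w).trans hw1
    · simp only [Function.comp_apply, hfu]
      exact (Equiv.sum_comp σ fun i => w i • z i).symm
  · rintro ⟨k, u, t, hu, ht, h1, rfl⟩
    exact mem_convexHull_of_exists_fintype t (f ∘ u) (fun i => (ht i).le) h1
      (fun i => Set.mem_image_of_mem f (hu i)) rfl

theorem Matrix.isCompact_unitaryGroup {n 𝕜 : Type*} [Fintype n] [DecidableEq n] [RCLike 𝕜] :
    IsCompact (unitaryGroup n 𝕜 : Set (Matrix n n 𝕜)) :=
  (isCompact_univ_pi fun _ => isCompact_univ_pi fun _ => isCompact_closedBall (0 : 𝕜) 1)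
    |>.of_isClosed_subset (isClosed_unitary (R := Matrix n n 𝕜)) fun U hU i _ j _ => by
      simpa using entry_norm_bound_of_unitary hU i j

def Matrix.flattenₗ (R : Type*) {m n α : Type*} [Semiring R] [AddCommGroup α] [Module R α] :
    Matrix m n α ≃ₗ[R] WithLp 2 (m × n → α) :=
  (LinearEquiv.curry R α m n).symm.trans (WithLp.linearEquiv 2 R _).symm

theorem frobNorm_eq_norm_flattenₗ {n : ℕ} (M : Matrix (Fin n) (Fin n) ℂ) :
    frobNorm M = ‖(Matrix.flattenₗ ℝ M : EuclideanSpace ℂ (Fin n × Fin n))‖ := by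
  rw [frobNorm, EuclideanSpace.norm_eq]
  congr 1
  simp only [Matrix.trace, Matrix.diag, Matrix.mul_apply, Matrix.conjTranspose_apply,
    RCLike.star_def, Complex.conj_mul', Fintype.sum_prod_type, Complex.re_sum]
  rw [Finset.sum_comm]
  norm_cast

theorem stmt_12 {n : ℕ} (A B : Matrix (Fin n) (Fin n) ℂ) :
    (∃ (k : ℕ) (U : Fin k → Matrix (Fin n) (Fin n) ℂ) (t : Fin k → ℝ),
        (∀ i, U i ∈ Matrix.unitaryGroup (Fin n) ℂ) ∧ (∀ i, 0 < t i) ∧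
        (∑ i, t i = 1) ∧ A = ∑ i, t i • (U i * B * star (U i))) ↔
    (∀ C : Matrix (Fin n) (Fin n) ℂ, ∃ U ∈ Matrix.unitaryGroup (Fin n) ℂ,
      frobNorm (A - U * B * star U) ≤ frobNorm (C - U * B * star U)) := by
  let φ : Matrix (Fin n) (Fin n) ℂ ≃ₗ[ℝ] EuclideanSpace ℂ (Fin n × Fin n) := flattenₗ ℝ
  let orbit := (fun U => φ (U * B * star U)) '' (unitaryGroup (Fin n) ℂ : Set _)
  have horbit : IsCompact orbit :=
    isCompact_unitaryGroup.image <| φ.toLinearMap.continuous_of_finiteDimensional.comp (by fun_prop)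
  calc _ ↔ φ A ∈ convexHull ℝ orbit := by
        simp only [orbit, mem_convexHull_image_iff_exists_fin, ← map_smul, ← map_sum,
          φ.injective.eq_iff, SetLike.mem_coe]
    _ ↔ ∀ c, ∃ p ∈ orbit, ‖φ A - p‖ ≤ ‖c - p‖ :=
        mem_convexHull_iff_forall_exists_norm_sub_le (isCompact_convexHull horbit).isComplete
    _ ↔ _ := by
        simp only [orbit, φ.surjective.forall, Set.exists_mem_image, ← map_sub,
          frobNorm_eq_norm_flattenₗ, SetLike.mem_coe]
        rfl
end

section
/- Let H be a Hilbert space, X ⊆ H bounded, ξ ∈ H, and Ω ⊆ H dense. Define Ω_ξ = {η ∈ Ω : ∃ ζ ∈ X, ‖ξ - ζ‖ ≤ ‖η - ζ‖}. Then ξ ∈ cl(conv X) if and only if Ω_ξ = Ω, and this holds if and only if Ω_ξ is dense in H. -/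
open RealInnerProductSpace

/-- If `ξ` is in the closed convex hull of `X`, every point majorizes. -/
lemma stmt_14_aux_mem {H : Type*} [NormedAddCommGroup H] [InnerProductSpace ℝ H]
    (X : Set H) (ξ : H) (hξ : ξ ∈ closure (convexHull ℝ X)) (η : H) :
    ∃ ζ ∈ X, ‖ξ - ζ‖ ≤ ‖η - ζ‖ := by
  by_contra h
  push_neg at h
  -- every ζ ∈ X satisfies ‖η - ζ‖ < ‖ξ - ζ‖
  set S : Set H := {z | ⟪ξ - η, z⟫ ≤ (‖ξ‖ ^ 2 - ‖η‖ ^ 2) / 2} with hS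
  have hlin : IsLinearMap ℝ (fun z : H => ⟪ξ - η, z⟫) :=
    ⟨fun a b => inner_add_right _ _ _, fun c x => real_inner_smul_right _ _ _⟩
  have hSconv : Convex ℝ S := convex_halfSpace_le hlin _
  have hSclosed : IsClosed S := by
    have : Continuous fun z : H => ⟪ξ - η, z⟫ := continuous_const.inner continuous_id
    exact isClosed_le this continuous_const
  have hXS : X ⊆ S := by
    intro ζ hζ
    have hlt := h ζ hζ
    have h1 : ‖η - ζ‖ ^ 2 = ‖η‖ ^ 2 - 2 * ⟪η, ζ⟫ + ‖ζ‖ ^ 2 := by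
      rw [@norm_sub_sq_real]
    have h2 : ‖ξ - ζ‖ ^ 2 = ‖ξ‖ ^ 2 - 2 * ⟪ξ, ζ⟫ + ‖ζ‖ ^ 2 := by
      rw [@norm_sub_sq_real]
    have h3 : ‖η - ζ‖ ^ 2 ≤ ‖ξ - ζ‖ ^ 2 := by
      apply sq_le_sq' <;> nlinarith [norm_nonneg (η - ζ), norm_nonneg (ξ - ζ)]
    have h4 : ⟪ξ - η, ζ⟫ = ⟪ξ, ζ⟫ - ⟪η, ζ⟫ := inner_sub_left _ _ _
    simp only [hS, Set.mem_setOf_eq]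
    nlinarith
  have hξS : ξ ∈ S :=
    closure_minimal (convexHull_min hXS hSconv) hSclosed hξ
  have hξη : ξ = η := by
    have h5 : ⟪ξ - η, ξ⟫ = ⟪ξ, ξ⟫ - ⟪η, ξ⟫ := inner_sub_left _ _ _
    have h6 : ‖ξ - η‖ ^ 2 = ‖ξ‖ ^ 2 - 2 * ⟪ξ, η⟫ + ‖η‖ ^ 2 := by
      rw [@norm_sub_sq_real]
    have h7 : ⟪ξ, ξ⟫ = ‖ξ‖ ^ 2 := real_inner_self_eq_norm_sq ξ
    have h8 : ⟪η, ξ⟫ = ⟪ξ, η⟫ := real_inner_comm _ _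
    have h9 : ‖ξ - η‖ ^ 2 ≤ 0 := by
      have := hξS
      simp only [hS, Set.mem_setOf_eq] at this
      nlinarith
    have : ‖ξ - η‖ = 0 := by nlinarith [norm_nonneg (ξ - η)]
    have := norm_sub_eq_zero_iff.mp this
    exact this
  -- X is nonempty since its closed convex hull contains ξ
  have hXne : X.Nonempty := by
    rw [← convexHull_nonempty_iff (𝕜 := ℝ)]
    rcases Set.eq_empty_or_nonempty (convexHull ℝ X) with he | hne
    · rw [he] at hξ; simp at hξ
    · exact hne
  obtain ⟨ζ, hζ⟩ := hXne
  have := h ζ hζ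
  rw [hξη] at this
  exact lt_irrefl _ this

/-- If `ξ` is not in the closed convex hull of bounded `X`, there is a ball all of whose
points strictly improve on `ξ` against every `ζ ∈ X`. -/
lemma stmt_14_aux_sep {H : Type*} [NormedAddCommGroup H] [InnerProductSpace ℝ H]
    [CompleteSpace H] (X : Set H) (hX : Bornology.IsBounded X) (ξ : H)
    (hξ : ξ ∉ closure (convexHull ℝ X)) :
    ∃ p : H, ∃ ε > (0 : ℝ), ∀ η ∈ Metric.ball p ε, ∀ ζ ∈ X, ‖η - ζ‖ < ‖ξ - ζ‖ := by
  rcases X.eq_empty_or_nonempty with rfl | hne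
  · exact ⟨0, 1, one_pos, fun η _ ζ hζ => absurd hζ (Set.notMem_empty ζ)⟩
  set C := closure (convexHull ℝ X) with hC
  have hCc : Convex ℝ C := (convex_convexHull ℝ X).closure
  have hXC : X ⊆ C := (subset_convexHull ℝ X).trans subset_closure
  have hCne : C.Nonempty := hne.mono hXC
  obtain ⟨p, hpC, hmin⟩ :=
    exists_norm_eq_iInf_of_complete_convex hCne isClosed_closure.isComplete hCc ξ
  have hproj : ∀ w ∈ C, ⟪ξ - p, w - p⟫ ≤ 0 :=
    (norm_eq_iInf_iff_real_inner_le_zero hCc hpC).1 hmin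
  obtain ⟨r, hr⟩ := hX.subset_closedBall ξ
  set M : ℝ := max r 1 with hM
  have hM1 : (1 : ℝ) ≤ M := le_max_right _ _
  have hM0 : (0 : ℝ) < M := lt_of_lt_of_le one_pos hM1
  have hbd : ∀ ζ ∈ X, ‖ξ - ζ‖ ≤ M := by
    intro ζ hζ
    have := hr hζ
    rw [Metric.mem_closedBall, dist_comm] at this
    calc ‖ξ - ζ‖ = dist ξ ζ := (dist_eq_norm _ _).symm
    _ ≤ r := this
    _ ≤ M := le_max_left _ _
  have hvpos : 0 < ‖p - ξ‖ := by
    rw [norm_pos_iff, sub_ne_zero]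
    intro hpe; exact hξ (hpe ▸ hpC)
  refine ⟨p, ‖p - ξ‖ ^ 2 / (2 * M), by positivity, ?_⟩
  intro η hη ζ hζ
  rw [Metric.mem_ball, dist_eq_norm] at hη
  have h1 : ⟪ξ - p, ζ - p⟫ ≤ 0 := hproj ζ (hXC hζ)
  have h2 : ‖ξ - ζ‖ ^ 2 = ‖(ξ - p) + (p - ζ)‖ ^ 2 := by ring_nf; rw [sub_add_sub_cancel]
  have h3 : ‖(ξ - p) + (p - ζ)‖ ^ 2
      = ‖ξ - p‖ ^ 2 + 2 * ⟪ξ - p, p - ζ⟫ + ‖p - ζ‖ ^ 2 := by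
    rw [@norm_add_sq_real]
  have h4 : ⟪ξ - p, p - ζ⟫ = - ⟪ξ - p, ζ - p⟫ := by
    rw [← inner_neg_right]; congr 1; abel
  have h5 : ‖ξ - p‖ ^ 2 + ‖p - ζ‖ ^ 2 ≤ ‖ξ - ζ‖ ^ 2 := by nlinarith
  have hvp : ‖p - ξ‖ = ‖ξ - p‖ := norm_sub_rev _ _
  have haM : ‖ξ - ζ‖ ≤ M := hbd ζ hζ
  -- ‖p - ζ‖ ≤ ‖ξ - ζ‖ - ε
  rw [← hvp] at h5
  have hkey : ‖p - ζ‖ ≤ ‖ξ - ζ‖ - ‖p - ξ‖ ^ 2 / (2 * M) := by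
    have hepos : (0 : ℝ) ≤ ‖p - ξ‖ ^ 2 / (2 * M) := by positivity
    have he : ‖p - ξ‖ ^ 2 / (2 * M) * (2 * M) = ‖p - ξ‖ ^ 2 := by field_simp
    have hcle : ‖p - ξ‖ ≤ ‖ξ - ζ‖ := by
      nlinarith [norm_nonneg (p - ζ), norm_nonneg (ξ - ζ), norm_nonneg (p - ξ)]
    have heM : ‖p - ξ‖ ^ 2 / (2 * M) * ‖ξ - ζ‖ ≤ ‖p - ξ‖ ^ 2 / (2 * M) * M :=
      mul_le_mul_of_nonneg_left haM hepos
    have hc2 : ‖p - ξ‖ ^ 2 / (2 * M) ≤ ‖ξ - ζ‖ / 2 := by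
      rw [div_le_div_iff₀ (by positivity) two_pos]
      nlinarith [norm_nonneg (p - ξ), norm_nonneg (ξ - ζ)]
    have hnn : 0 ≤ ‖ξ - ζ‖ - ‖p - ξ‖ ^ 2 / (2 * M) := by
      nlinarith [norm_nonneg (ξ - ζ)]
    have hsq : ‖p - ζ‖ ^ 2 ≤ (‖ξ - ζ‖ - ‖p - ξ‖ ^ 2 / (2 * M)) ^ 2 := by
      nlinarith [sq_nonneg (‖p - ξ‖ ^ 2 / (2 * M))]
    nlinarith [norm_nonneg (p - ζ)]
  have htri : ‖η - ζ‖ ≤ ‖η - p‖ + ‖p - ζ‖ := by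
    have := dist_triangle η p ζ
    simpa [dist_eq_norm] using this
  calc ‖η - ζ‖ ≤ ‖η - p‖ + ‖p - ζ‖ := htri
  _ < ‖p - ξ‖ ^ 2 / (2 * M) + (‖ξ - ζ‖ - ‖p - ξ‖ ^ 2 / (2 * M)) := by
      exact add_lt_add_of_lt_of_le hη hkey
  _ = ‖ξ - ζ‖ := by ring

theorem stmt_14 {H : Type*} [NormedAddCommGroup H] [InnerProductSpace ℝ H] [CompleteSpace H]
    (X : Set H) (hX : Bornology.IsBounded X) (ξ : H) (Ω : Set H) (hΩ : Dense Ω) :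
    (ξ ∈ closure (convexHull ℝ X) ↔ {η ∈ Ω | ∃ ζ ∈ X, ‖ξ - ζ‖ ≤ ‖η - ζ‖} = Ω) ∧
    ({η ∈ Ω | ∃ ζ ∈ X, ‖ξ - ζ‖ ≤ ‖η - ζ‖} = Ω ↔
      Dense {η ∈ Ω | ∃ ζ ∈ X, ‖ξ - ζ‖ ≤ ‖η - ζ‖}) := by
  have hA : ξ ∈ closure (convexHull ℝ X) → {η ∈ Ω | ∃ ζ ∈ X, ‖ξ - ζ‖ ≤ ‖η - ζ‖} = Ω := by
    intro hξ
    ext η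
    exact ⟨fun h => h.1, fun h => ⟨h, stmt_14_aux_mem X ξ hξ η⟩⟩
  have hB : Dense {η ∈ Ω | ∃ ζ ∈ X, ‖ξ - ζ‖ ≤ ‖η - ζ‖} → ξ ∈ closure (convexHull ℝ X) := by
    intro hd
    by_contra hξ
    obtain ⟨p, ε, hε, hball⟩ := stmt_14_aux_sep X hX ξ hξ
    obtain ⟨η, ⟨hηΩ, ζ, hζX, hle⟩, hηb⟩ :=
      hd.exists_mem_open Metric.isOpen_ball ⟨p, Metric.mem_ball_self hε⟩
    exact absurd hle (not_le.mpr (hball η hηb ζ hζX))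
  refine ⟨⟨hA, ?_⟩, ⟨fun h => by rw [h]; exact hΩ, fun hd => hA (hB hd)⟩⟩
  intro heq
  by_contra hξ
  obtain ⟨p, ε, hε, hball⟩ := stmt_14_aux_sep X hX ξ hξ
  obtain ⟨η, hηΩ, hηb⟩ := hΩ.exists_mem_open Metric.isOpen_ball ⟨p, Metric.mem_ball_self hε⟩
  have : η ∈ {η ∈ Ω | ∃ ζ ∈ X, ‖ξ - ζ‖ ≤ ‖η - ζ‖} := by rw [heq]; exact hηΩ
  obtain ⟨_, ζ, hζX, hle⟩ := this
  exact absurd hle (not_le.mpr (hball η hηb ζ hζX))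
end

section
/- Let H be a Hilbert space, X ⊆ H bounded, ξ ∈ H, and Ω ⊆ H dense. If the closure of Ω_ξ := {η ∈ Ω : ∃ ζ ∈ X, ‖ξ - ζ‖ ≤ ‖η - ζ‖} contains the topological boundary of cl(conv X), and cl(conv X) is nonempty, then ξ ∈ cl(conv X). -/
open RealInnerProductSpace

theorem stmt_15 {H : Type*} [NormedAddCommGroup H] [InnerProductSpace ℝ H] [CompleteSpace H]
    (X : Set H) (hX : Bornology.IsBounded X) (hXne : X.Nonempty)
    (ξ : H) (Ω : Set H) (hΩ : Dense Ω)
    (h : frontier (closure (convexHull ℝ X)) ⊆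
      closure {η ∈ Ω | ∃ ζ ∈ X, ‖ξ - ζ‖ ≤ ‖η - ζ‖}) :
    ξ ∈ closure (convexHull ℝ X) := by
  by_contra hξ
  set K := closure (convexHull ℝ X) with hKdef
  have hKconv : Convex ℝ K := (convex_convexHull ℝ X).closure
  have hKclosed : IsClosed K := isClosed_closure
  have hKne : K.Nonempty := hXne.mono ((subset_convexHull ℝ X).trans subset_closure)
  obtain ⟨η₀, hη₀K, hproj⟩ :=
    exists_norm_eq_iInf_of_complete_convex hKne hKclosed.isComplete hKconv ξ
  have hinner : ∀ w ∈ K, ⟪ξ - η₀, w - η₀⟫ ≤ 0 :=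
    (norm_eq_iInf_iff_real_inner_le_zero hKconv hη₀K).1 hproj
  set d := ‖ξ - η₀‖ with hd
  have hd0 : 0 < d := by
    rw [hd, norm_pos_iff, sub_ne_zero]
    intro hEq; exact hξ (hEq ▸ hη₀K)
  -- key: distance squared inequality
  have hkey : ∀ ζ ∈ K, d ^ 2 + ‖η₀ - ζ‖ ^ 2 ≤ ‖ξ - ζ‖ ^ 2 := by
    intro ζ hζ
    have hdecomp : ξ - ζ = (ξ - η₀) + (η₀ - ζ) := by abel
    rw [hdecomp, norm_add_sq_real]
    have : ⟪ξ - η₀, η₀ - ζ⟫ = - ⟪ξ - η₀, ζ - η₀⟫ := by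
      rw [← inner_neg_right, neg_sub]
    nlinarith [hinner ζ hζ]
  -- η₀ is on the frontier
  have hfr : η₀ ∈ frontier K := by
    rw [frontier_eq_closure_inter_closure]
    refine ⟨subset_closure hη₀K, ?_⟩
    rw [Metric.mem_closure_iff]
    intro ε hε
    set t : ℝ := min (ε / (2 * d)) 1 with ht
    have ht0 : 0 < t := lt_min (by positivity) one_pos
    refine ⟨η₀ + t • (ξ - η₀), ?_, ?_⟩
    · intro hmem
      have := hinner _ hmem
      rw [add_sub_cancel_left, real_inner_smul_right, real_inner_self_eq_norm_sq] at this
      rw [← hd] at this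
      nlinarith [mul_pos ht0 (pow_pos hd0 2)]
    · rw [dist_eq_norm]
      have : η₀ - (η₀ + t • (ξ - η₀)) = (-t) • (ξ - η₀) := by
        rw [neg_smul]; abel
      rw [this, norm_smul, norm_neg, Real.norm_of_nonneg ht0.le]
      calc t * ‖ξ - η₀‖ ≤ (ε / (2 * d)) * d :=
            mul_le_mul (min_le_left _ _) le_rfl (norm_nonneg _) (by positivity)
        _ = ε / 2 := by field_simp
        _ < ε := by linarith
  have hη₀cl := h hfr
  -- bound on X
  obtain ⟨M, hM⟩ := (hX.subset_closedBall η₀)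
  have hM0 : 0 ≤ M := by
    obtain ⟨ζ, hζ⟩ := hXne
    have := hM hζ
    rw [Metric.mem_closedBall] at this
    exact le_trans dist_nonneg this
  set ε : ℝ := min (d / 2) (d ^ 2 / (4 * (M + 1))) with hε
  have hε0 : 0 < ε := lt_min (by positivity) (by positivity)
  obtain ⟨η, hηΩ, hηd⟩ := Metric.mem_closure_iff.1 hη₀cl ε hε0
  obtain ⟨-, ζ, hζX, hζle⟩ := hηΩ
  have hζK : ζ ∈ K := subset_closure (subset_convexHull ℝ X hζX)
  have hζM : ‖η₀ - ζ‖ ≤ M := by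
    have := hM hζX
    rw [Metric.mem_closedBall, dist_comm, dist_eq_norm] at this
    exact this
  have h1 : ‖ξ - ζ‖ ≤ ‖η - ζ‖ := hζle
  have h2 : ‖η - ζ‖ ≤ ‖η - η₀‖ + ‖η₀ - ζ‖ := by simpa [dist_eq_norm] using dist_triangle η η₀ ζ
  have h3 : ‖η - η₀‖ < ε := by rwa [dist_comm, dist_eq_norm] at hηd
  have h4 : d ^ 2 + ‖η₀ - ζ‖ ^ 2 ≤ ‖ξ - ζ‖ ^ 2 := hkey ζ hζK
  -- contradiction via squares
  have hεd : ε ≤ d / 2 := min_le_left _ _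
  have hεM : ε ≤ d ^ 2 / (4 * (M + 1)) := min_le_right _ _
  have hsq : (‖η₀ - ζ‖ + ε) ^ 2 < ‖ξ - ζ‖ ^ 2 := by
    have h5 : 2 * ‖η₀ - ζ‖ * ε ≤ 2 * M * (d ^ 2 / (4 * (M + 1))) := by
      apply mul_le_mul (by nlinarith) hεM hε0.le (by positivity)
    have h6 : 2 * M * (d ^ 2 / (4 * (M + 1))) ≤ d ^ 2 / 2 := by
      rw [← mul_div_assoc, div_le_div_iff₀ (by positivity) (by norm_num : (0:ℝ) < 2)]
      nlinarith
    nlinarith [sq_nonneg (‖η₀ - ζ‖), norm_nonneg (η₀ - ζ)]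
  have hlt : ‖η₀ - ζ‖ + ε < ‖ξ - ζ‖ := by
    nlinarith [norm_nonneg (ξ - ζ), norm_nonneg (η₀ - ζ)]
  linarith
end
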